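/- Coalesce preserves cyclic unifiers: ⟨η, R⟩ is a cyclic unifier of x=y ∧ P if and only if it is a cyclic unifier of x=y ∧ P{x↦y}. -/

import Mathlib

/-- Finite first-order terms. -/
inductive Tm (F V : Type) : Type
  | var : V → Tm F V
  | app : F → List (Tm F V) → Tm F V

namespace Tm
variable {F V W : Type}

/-- Application of a substitution to a term. -/
def subst (σ : V → Tm F W) : Tm F V → Tm F W
  | .var x => σ x
  | .app f l => .app f (l.attach.map fun t => t.1.subst σ)
  decreasing_by simp only [Tm.app.sizeOf_spec]; have := List.sizeOf_lt_of_mem t.2; omega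

/-- `x` occurs in `t`. -/
inductive HasVar (x : V) : Tm F V → Prop
  | var : HasVar x (.var x)
  | app {f l t} : t ∈ l → HasVar x t → HasVar x (.app f l)

/-- `t` is not a variable. -/
def NonVar (t : Tm F V) : Prop := ∀ z, t ≠ .var z

end Tm

/-- An equation is an oriented pair of terms; a unification problem is a finite
multiset of equations. -/
abbrev Eqn (F V : Type) := Tm F V × Tm F V

/-- One-step rewriting where variables are treated as constants (rules applied
literally, closure under contexts). -/
inductive GRw {F V : Type} (R : Set (Tm F V × Tm F V)) : Tm F V → Tm F V → Prop
  | rule {l r} : (l, r) ∈ R → GRw R l r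
  | app (f : F) (pre post : List (Tm F V)) {s t} :
      GRw R s t → GRw R (.app f (pre ++ s :: post)) (.app f (pre ++ t :: post))

/-- Evaluation of a finite term in an `F`-algebra `T` (e.g. the algebra of
possibly infinite rational trees) under an assignment of the variables. -/
def ev {F V T : Type} (ap : F → List T → T) (θ : V → T) : Tm F V → T
  | .var x => θ x
  | .app f l => ap f (l.attach.map fun t => ev ap θ t.1)
  decreasing_by simp only [Tm.app.sizeOf_spec]; have := List.sizeOf_lt_of_mem t.2; omega

/-- Constructor-injectivity, as in the algebra of (finite or infinite rational)
trees. -/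
def InjAp {F T : Type} (ap : F → List T → T) : Prop :=
  ∀ f l g m, ap f l = ap g m → f = g ∧ l = m

/-- `θ` solves every equation of `P` (in the tree algebra `T`). -/
def Solves {F V T : Type} (ap : F → List T → T) (θ : V → T)
    (P : Multiset (Eqn F V)) : Prop :=
  ∀ e ∈ P, ev ap θ e.1 = ev ap θ e.2

section Cyclic
variable {F V : Type}

/-- The cyclic variables (left-hand sides) of a cyclic rewrite system. -/
def cycVars (Rc : Multiset (V × Tm F V)) : Set V := {y | ∃ v, (y, v) ∈ Rc}

/-- `Rc` is a cyclic rewrite system `{ȳ → v̄}`: pairwise distinct variable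
left-hand sides, non-variable right-hand sides, each containing some `y ∈ ȳ`. -/
def CyclicSystem (Rc : Multiset (V × Tm F V)) : Prop :=
  (Rc.map Prod.fst).Nodup ∧
  ∀ yv ∈ Rc, (yv.2 : Tm F V).NonVar ∧ ∃ z ∈ cycVars Rc, Tm.HasVar z yv.2

/-- The ground rules of `Rc` instantiated by `η`:  `{ȳ → v̄η}`. -/
def cycRules (η : V → Tm F V) (Rc : Multiset (V × Tm F V)) :
    Set (Tm F V × Tm F V) :=
  {p | ∃ yv ∈ Rc, p = (Tm.var yv.1, Tm.subst η yv.2)}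

/-- A cyclic unifier `⟨η, Rc⟩` of a unification problem `P`:
`Dom(η) ⊆ Var(P) ∖ ȳ`, `Ran(η) ∩ ȳ = ∅`, `Ran(η) ∩ Dom(η) = ∅`;
`P` and `P ∧ Rc` have the same solutions (in every tree algebra); and for every
equation `u = v` of `P`, `uη` and `vη` are joinable by `Rcη` (variables treated
as constants), equivalently congruent modulo the congruence closure of `Rcη`. -/
def CyclicUnifier (P : Multiset (Eqn F V)) (η : V → Tm F V)
    (Rc : Multiset (V × Tm F V)) : Prop :=
  CyclicSystem Rc ∧
  (∀ x, η x ≠ .var x →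
    ((∃ e ∈ P, Tm.HasVar x e.1 ∨ Tm.HasVar x e.2) ∧ x ∉ cycVars Rc)) ∧
  (∀ x, η x ≠ .var x → ∀ z, Tm.HasVar z (η x) → z ∉ cycVars Rc ∧ η z = .var z) ∧
  (∀ (T : Type) (ap : F → List T → T), InjAp ap → ∀ θ : V → T,
    Solves ap θ P ↔ Solves ap θ (P + Rc.map fun yv => (Tm.var yv.1, yv.2))) ∧
  (∀ e ∈ P, ∃ w, Relation.ReflTransGen (GRw (cycRules η Rc)) (Tm.subst η e.1) w ∧
      Relation.ReflTransGen (GRw (cycRules η Rc)) (Tm.subst η e.2) w)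

end Cyclic

/-- The substitution `{x ↦ s}`. -/
def single {F V : Type} [DecidableEq V] (x : V) (s : Tm F V) : V → Tm F V :=
  fun z => if z = x then s else .var z

/-- Apply `{x ↦ s}` to every term of a problem. -/
def substProb {F V : Type} [DecidableEq V] (x : V) (s : Tm F V)
    (P : Multiset (Eqn F V)) : Multiset (Eqn F V) :=
  P.map fun e => (e.1.subst (single x s), e.2.subst (single x s))


section CoalesceAux
variable {F V : Type}

theorem Tm.subst_var' {W : Type} (σ : V → Tm F W) (x : V) :
    Tm.subst σ (.var x) = σ x := by rw [Tm.subst]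

theorem Tm.subst_app' {W : Type} (σ : V → Tm F W) (f : F) (l : List (Tm F V)) :
    Tm.subst σ (.app f l) = .app f (l.map (Tm.subst σ)) := by
  rw [Tm.subst]; simp [List.attach_map_val]

theorem ev_var' {T : Type} (ap : F → List T → T) (θ : V → T) (x : V) :
    ev ap θ (.var x) = θ x := by rw [ev]

theorem ev_app' {T : Type} (ap : F → List T → T) (θ : V → T) (f : F) (l : List (Tm F V)) :
    ev ap θ (.app f l) = ap f (l.map (ev ap θ)) := by
  rw [ev]; simp [List.attach_map_val]

theorem Tm.my_ind {P : Tm F V → Prop} (hv : ∀ x, P (.var x))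
    (ha : ∀ f l, (∀ t ∈ l, P t) → P (.app f l)) : ∀ t, P t
  | .var x => hv x
  | .app f l => ha f l (fun t ht => Tm.my_ind hv ha t)
  decreasing_by simp only [Tm.app.sizeOf_spec]; have := List.sizeOf_lt_of_mem ht; omega

theorem ev_subst' {T W : Type} (ap : F → List T → T) (θ : W → T) (σ : V → Tm F W) :
    ∀ t : Tm F V, ev ap θ (Tm.subst σ t) = ev ap (fun z => ev ap θ (σ z)) t := by
  refine Tm.my_ind (fun x => by rw [Tm.subst_var', ev_var']) (fun f l ih => ?_)
  rw [Tm.subst_app', ev_app', ev_app', List.map_map]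
  exact congrArg (ap f) (List.map_congr_left fun t ht => ih t ht)

theorem ev_single {T : Type} [DecidableEq V] (ap : F → List T → T) (θ : V → T) {x y : V}
    (h : θ x = θ y) (t : Tm F V) :
    ev ap θ (Tm.subst (single x (.var y)) t) = ev ap θ t := by
  rw [ev_subst']
  congr 1
  funext z
  by_cases hz : z = x <;> simp [single, hz, ev_var', h]

theorem hasVar_var_iff {z w : V} : Tm.HasVar z (Tm.var w : Tm F V) ↔ z = w :=
  ⟨fun h => by cases h; rfl, fun h => h ▸ Tm.HasVar.var⟩

theorem hasVar_app_iff {z : V} {f : F} {l : List (Tm F V)} :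
    Tm.HasVar z (.app f l) ↔ ∃ t ∈ l, Tm.HasVar z t := by
  constructor
  · intro h; cases h with | app ht hv => exact ⟨_, ht, hv⟩
  · rintro ⟨t, ht, hv⟩; exact .app ht hv

theorem hasVar_subst_single [DecidableEq V] {x y z : V} (hzx : z ≠ x) :
    ∀ t : Tm F V, Tm.HasVar z t → Tm.HasVar z (Tm.subst (single x (.var y)) t) := by
  refine Tm.my_ind ?_ ?_
  · intro w h
    rw [hasVar_var_iff] at h; subst h
    rw [Tm.subst_var']
    simp [single, hzx, hasVar_var_iff]
  · intro f l ih h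
    rw [hasVar_app_iff] at h
    obtain ⟨t, ht, hv⟩ := h
    rw [Tm.subst_app', hasVar_app_iff]
    exact ⟨_, List.mem_map_of_mem ht, ih t ht hv⟩

theorem hasVar_of_subst_single [DecidableEq V] {x y z : V} :
    ∀ t : Tm F V, Tm.HasVar z (Tm.subst (single x (.var y)) t) → z = y ∨ Tm.HasVar z t := by
  refine Tm.my_ind ?_ ?_
  · intro w h
    rw [Tm.subst_var'] at h
    by_cases hw : w = x
    · simp [single, hw, hasVar_var_iff] at h
      exact Or.inl h
    · simp [single, hw, hasVar_var_iff] at h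
      exact Or.inr (h ▸ Tm.HasVar.var)
  · intro f l ih h
    rw [Tm.subst_app', hasVar_app_iff] at h
    obtain ⟨t', ht', hv⟩ := h
    rw [List.mem_map] at ht'
    obtain ⟨u, hu, rfl⟩ := ht'
    rcases ih u hu hv with h | h
    · exact Or.inl h
    · exact Or.inr (hasVar_app_iff.2 ⟨u, hu, h⟩)

theorem cons_split {α : Type*} : ∀ {p1 : List α} {p2 : List α} {s1 s2 : α} {q1 q2 : List α},
    p1 ++ s1 :: q1 = p2 ++ s2 :: q2 →
    (p1 = p2 ∧ s1 = s2 ∧ q1 = q2) ∨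
    (∃ mid, p2 = p1 ++ s1 :: mid ∧ q1 = mid ++ s2 :: q2) ∨
    (∃ mid, p1 = p2 ++ s2 :: mid ∧ q2 = mid ++ s1 :: q1)
  | [], [], s1, s2, q1, q2, h => by simp_all
  | [], h2 :: t2, s1, s2, q1, q2, h => by
      simp only [List.nil_append, List.cons_append, List.cons.injEq] at h
      exact Or.inr (Or.inl ⟨t2, by simp [h.1], h.2⟩)
  | h1 :: t1, [], s1, s2, q1, q2, h => by
      simp only [List.nil_append, List.cons_append, List.cons.injEq] at h
      exact Or.inr (Or.inr ⟨t1, by simp [h.1], h.2.symm⟩)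
  | h1 :: t1, h2 :: t2, s1, s2, q1, q2, h => by
      simp only [List.cons_append, List.cons.injEq] at h
      obtain ⟨rfl, h⟩ := h
      rcases cons_split h with ⟨rfl, rfl, rfl⟩ | ⟨mid, rfl, rfl⟩ | ⟨mid, rfl, rfl⟩
      · exact Or.inl ⟨rfl, rfl, rfl⟩
      · exact Or.inr (Or.inl ⟨mid, rfl, rfl⟩)
      · exact Or.inr (Or.inr ⟨mid, rfl, rfl⟩)

theorem rtg_app {R : Set (Tm F V × Tm F V)} (f : F) (pre post : List (Tm F V)) {s t : Tm F V}
    (h : Relation.ReflTransGen (GRw R) s t) :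
    Relation.ReflTransGen (GRw R) (.app f (pre ++ s :: post)) (.app f (pre ++ t :: post)) :=
  Relation.ReflTransGen.lift (fun u => Tm.app f (pre ++ u :: post))
    (fun _ _ h => GRw.app f pre post h) _ _ h

theorem grw_var_inv {R : Set (Tm F V × Tm F V)} {v : V} {c : Tm F V}
    (h : GRw R (.var v) c) : ((Tm.var v : Tm F V), c) ∈ R := by
  generalize hA : (Tm.var v : Tm F V) = a at h
  cases h with
  | rule hm => subst hA; exact hm
  | app f pre post hst => exact absurd hA (by simp)

theorem grw_app_inv {R : Set (Tm F V × Tm F V)} {f : F} {l : List (Tm F V)} {c : Tm F V}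
    (h : GRw R (.app f l) c) :
    ((Tm.app f l : Tm F V), c) ∈ R ∨
    ∃ pre post s t, l = pre ++ s :: post ∧ c = .app f (pre ++ t :: post) ∧ GRw R s t := by
  generalize hA : (Tm.app f l : Tm F V) = a at h
  cases h with
  | rule hm => subst hA; exact Or.inl hm
  | @app f' pre post s t hst =>
    injection hA with hf hl
    subst hf hl
    exact Or.inr ⟨pre, post, s, t, rfl, rfl, hst⟩

theorem grw_diamond {η : V → Tm F V} {Rc : Multiset (V × Tm F V)}
    (hN : (Rc.map Prod.fst).Nodup) :
    ∀ a b c : Tm F V, GRw (cycRules η Rc) a b → GRw (cycRules η Rc) a c →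
      ∃ d, Relation.ReflGen (GRw (cycRules η Rc)) b d ∧
           Relation.ReflTransGen (GRw (cycRules η Rc)) c d := by
  intro a b c h1
  induction h1 generalizing c with
  | @rule l r hm =>
    intro h2
    obtain ⟨yv, hyv, heq⟩ := hm
    have hl : l = .var yv.1 := congrArg Prod.fst heq
    have hr : r = Tm.subst η yv.2 := congrArg Prod.snd heq
    subst hl hr
    have hm2 := grw_var_inv h2
    obtain ⟨yv', hyv', heq2⟩ := hm2
    have hl2 : Tm.var yv.1 = Tm.var yv'.1 := congrArg Prod.fst heq2
    have hc : c = Tm.subst η yv'.2 := congrArg Prod.snd heq2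
    injection hl2 with hl2
    have : yv = yv' := Multiset.inj_on_of_nodup_map hN _ hyv _ hyv' hl2
    subst this hc
    exact ⟨_, .refl, .refl⟩
  | @app f pre post s t hst ih =>
    intro h2
    rcases grw_app_inv h2 with hm2 | ⟨pre', post', s', t', hl, rfl, hst'⟩
    · obtain ⟨yv', hyv', heq2⟩ := hm2
      exact absurd (congrArg Prod.fst heq2) (by simp)
    · rcases cons_split hl with ⟨rfl, rfl, rfl⟩ | ⟨mid, rfl, rfl⟩ | ⟨mid, rfl, rfl⟩
      · obtain ⟨d0, hg1, hg2⟩ := ih _ hst'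
        refine ⟨.app f (pre ++ d0 :: post), ?_, rtg_app f pre post hg2⟩
        cases hg1 with
        | refl => exact .refl
        | single h => exact .single (GRw.app f pre post h)
      · refine ⟨.app f (pre ++ t :: (mid ++ t' :: post')), ?_, ?_⟩
        · refine .single ?_
          have := GRw.app (R := cycRules η Rc) f (pre ++ t :: mid) post' hst'
          simpa [List.append_assoc] using this
        · refine .single ?_
          have := GRw.app (R := cycRules η Rc) f pre (mid ++ t' :: post') hst
          simpa [List.append_assoc] using this
      · refine ⟨.app f (pre' ++ t' :: (mid ++ t :: post)), ?_, ?_⟩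
        · refine .single ?_
          have := GRw.app (R := cycRules η Rc) f pre' (mid ++ t :: post) hst'
          simpa [List.append_assoc] using this
        · refine .single ?_
          have := GRw.app (R := cycRules η Rc) f (pre' ++ t' :: mid) post hst
          simpa [List.append_assoc] using this

theorem E_equiv {η : V → Tm F V} {Rc : Multiset (V × Tm F V)}
    (hN : (Rc.map Prod.fst).Nodup) :
    Equivalence (Relation.Join (Relation.ReflTransGen (GRw (cycRules η Rc)))) :=
  Relation.equivalence_join_reflTransGen (fun a b c h1 h2 => grw_diamond hN a b c h1 h2)

theorem rtg_app_congr {R : Set (Tm F V × Tm F V)} (f : F) {l m : List (Tm F V)}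
    (h : List.Forall₂ (Relation.ReflTransGen (GRw R)) l m) :
    ∀ pre, Relation.ReflTransGen (GRw R) (.app f (pre ++ l)) (.app f (pre ++ m)) := by
  induction h with
  | nil => intro pre; exact .refl
  | @cons a b l' m' h1 h2 ih =>
    intro pre
    refine (rtg_app f pre _ h1).trans ?_
    have := ih (pre ++ [b])
    simpa [List.append_assoc] using this

theorem E_app {R : Set (Tm F V × Tm F V)} (f : F) {l m : List (Tm F V)}
    (h : List.Forall₂ (Relation.Join (Relation.ReflTransGen (GRw R))) l m) :
    Relation.Join (Relation.ReflTransGen (GRw R)) (.app f l) (.app f m) := by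
  have : ∃ w, List.Forall₂ (Relation.ReflTransGen (GRw R)) l w ∧
      List.Forall₂ (Relation.ReflTransGen (GRw R)) m w := by
    induction h with
    | nil => exact ⟨[], .nil, .nil⟩
    | cons h1 h2 ih =>
      obtain ⟨w, hw1, hw2⟩ := ih
      obtain ⟨c, hc1, hc2⟩ := h1
      exact ⟨c :: w, .cons hc1 hw1, .cons hc2 hw2⟩
  obtain ⟨w, h1, h2⟩ := this
  exact ⟨.app f w, by simpa using rtg_app_congr f h1 [],
    by simpa using rtg_app_congr f h2 []⟩

theorem subst_single_E [DecidableEq V] {η : V → Tm F V} {R : Set (Tm F V × Tm F V)} {x y : V}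
    (hxy : Relation.Join (Relation.ReflTransGen (GRw R)) (η x) (η y)) :
    ∀ t : Tm F V, Relation.Join (Relation.ReflTransGen (GRw R))
      (Tm.subst η (Tm.subst (single x (.var y)) t)) (Tm.subst η t) := by
  refine Tm.my_ind ?_ ?_
  · intro w
    by_cases hw : w = x
    · subst hw
      have h1 : Tm.subst (single w (Tm.var y)) (Tm.var w) = (Tm.var y : Tm F V) := by
        rw [Tm.subst_var']; simp [single]
      rw [h1, Tm.subst_var', Tm.subst_var']
      obtain ⟨c, hc1, hc2⟩ := hxy
      exact ⟨c, hc2, hc1⟩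
    · have h1 : Tm.subst (single x (Tm.var y)) (Tm.var w) = (Tm.var w : Tm F V) := by
        rw [Tm.subst_var']; simp [single, hw]
      rw [h1]
      exact ⟨_, .refl, .refl⟩
  · intro f l ih
    rw [Tm.subst_app', Tm.subst_app', Tm.subst_app', List.map_map]
    refine E_app f ?_
    rw [List.forall₂_map_left_iff, List.forall₂_map_right_iff]
    exact List.forall₂_same.2 fun t ht => ih t ht

theorem solves_cons {T : Type} (ap : F → List T → T) (θ : V → T) (e : Eqn F V)
    (P : Multiset (Eqn F V)) :
    Solves ap θ (e ::ₘ P) ↔ (ev ap θ e.1 = ev ap θ e.2) ∧ Solves ap θ P := by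
  simp [Solves]

theorem solves_add {T : Type} (ap : F → List T → T) (θ : V → T)
    (P Q : Multiset (Eqn F V)) :
    Solves ap θ (P + Q) ↔ Solves ap θ P ∧ Solves ap θ Q := by
  simp [Solves, or_imp, forall_and]

theorem solves_substProb {T : Type} [DecidableEq V] (ap : F → List T → T) (θ : V → T)
    {x y : V} (h : θ x = θ y) (P : Multiset (Eqn F V)) :
    Solves ap θ (substProb x (.var y) P) ↔ Solves ap θ P := by
  unfold Solves substProb
  constructor
  · intro hs e he
    have := hs _ (Multiset.mem_map_of_mem _ he)
    simpa [ev_single ap θ h] using this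
  · intro hs e he
    rw [Multiset.mem_map] at he
    obtain ⟨u, hu, rfl⟩ := he
    simpa [ev_single ap θ h] using hs u hu

end CoalesceAux

/-- the unification rule Coalesce preserves cyclic unifiers:
`⟨η, Rc⟩` is a cyclic unifier of `x = y ∧ P` iff it is a cyclic unifier of
`x = y ∧ P{x ↦ y}`. -/
theorem coalesce_preserves_cyclic_unifiers
    {F V : Type} [DecidableEq V] (x y : V) (P : Multiset (Eqn F V))
    (hxy : x ≠ y)
    (hx : ∃ e ∈ P, Tm.HasVar x e.1 ∨ Tm.HasVar x e.2)
    (hy : ∃ e ∈ P, Tm.HasVar y e.1 ∨ Tm.HasVar y e.2)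
    (η : V → Tm F V) (Rc : Multiset (V × Tm F V)) :
    CyclicUnifier ((Tm.var x, Tm.var y) ::ₘ P) η Rc ↔
    CyclicUnifier ((Tm.var x, Tm.var y) ::ₘ substProb x (Tm.var y) P) η Rc := by
  constructor
  · rintro ⟨h1, h2, h3, h4, h5⟩
    have hN := h1.1
    have hEq := E_equiv (η := η) hN
    refine ⟨h1, ?_, h3, ?_, ?_⟩
    · -- domain condition
      intro x' hx'
      obtain ⟨⟨e, he, hocc⟩, hnc⟩ := h2 x' hx'
      refine ⟨?_, hnc⟩
      rw [Multiset.mem_cons] at he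
      rcases he with rfl | he
      · exact ⟨_, Multiset.mem_cons_self _ _, hocc⟩
      · by_cases hxx : x' = x
        · subst hxx
          exact ⟨(Tm.var x', Tm.var y), Multiset.mem_cons_self _ _, Or.inl Tm.HasVar.var⟩
        · refine ⟨(Tm.subst (single x (Tm.var y)) e.1, Tm.subst (single x (Tm.var y)) e.2),
            Multiset.mem_cons_of_mem (Multiset.mem_map_of_mem _ he), ?_⟩
          rcases hocc with h | h
          · exact Or.inl (hasVar_subst_single hxx _ h)
          · exact Or.inr (hasVar_subst_single hxx _ h)
    · -- same solutions
      intro T ap hinj θ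
      have key := h4 T ap hinj θ
      rw [Multiset.cons_add, solves_cons, solves_cons, solves_add] at key
      rw [Multiset.cons_add, solves_cons, solves_cons, solves_add]
      simp only [ev_var'] at key ⊢
      constructor
      · rintro ⟨hθ, hP'⟩
        have hPs : Solves ap θ P := (solves_substProb ap θ hθ P).1 hP'
        obtain ⟨_, _, hR⟩ := key.1 ⟨hθ, hPs⟩
        exact ⟨hθ, hP', hR⟩
      · rintro ⟨hθ, hP', hR⟩
        exact ⟨hθ, hP'⟩
    · -- joinability
      have hxyE : Relation.Join (Relation.ReflTransGen (GRw (cycRules η Rc)))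
          (η x) (η y) := by
        have := h5 _ (Multiset.mem_cons_self _ _)
        simpa [Tm.subst_var', Relation.Join] using this
      intro e he
      rw [Multiset.mem_cons] at he
      rcases he with rfl | he
      · exact h5 _ (Multiset.mem_cons_self _ _)
      · rw [substProb, Multiset.mem_map] at he
        obtain ⟨u, hu, rfl⟩ := he
        have h1 := subst_single_E (η := η) hxyE u.1
        have h2 := subst_single_E (η := η) hxyE u.2
        have h0 := h5 u (Multiset.mem_cons_of_mem hu)
        exact hEq.trans h1 (hEq.trans h0 (hEq.symm h2))
  · rintro ⟨h1, h2, h3, h4, h5⟩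
    have hN := h1.1
    have hEq := E_equiv (η := η) hN
    refine ⟨h1, ?_, h3, ?_, ?_⟩
    · -- domain condition
      intro x' hx'
      obtain ⟨⟨e, he, hocc⟩, hnc⟩ := h2 x' hx'
      refine ⟨?_, hnc⟩
      rw [Multiset.mem_cons] at he
      rcases he with rfl | he
      · exact ⟨_, Multiset.mem_cons_self _ _, hocc⟩
      · rw [substProb, Multiset.mem_map] at he
        obtain ⟨u, hu, rfl⟩ := he
        by_cases hyy : x' = y
        · subst hyy
          exact ⟨(Tm.var x, Tm.var x'), Multiset.mem_cons_self _ _, Or.inr Tm.HasVar.var⟩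
        · rcases hocc with h | h
          · rcases hasVar_of_subst_single _ h with h' | h'
            · exact absurd h' hyy
            · exact ⟨u, Multiset.mem_cons_of_mem hu, Or.inl h'⟩
          · rcases hasVar_of_subst_single _ h with h' | h'
            · exact absurd h' hyy
            · exact ⟨u, Multiset.mem_cons_of_mem hu, Or.inr h'⟩
    · -- same solutions
      intro T ap hinj θ
      have key := h4 T ap hinj θ
      rw [Multiset.cons_add, solves_cons, solves_cons, solves_add] at key
      rw [Multiset.cons_add, solves_cons, solves_cons, solves_add]
      simp only [ev_var'] at key ⊢
      constructor
      · rintro ⟨hθ, hP⟩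
        have hPs : Solves ap θ (substProb x (Tm.var y) P) :=
          (solves_substProb ap θ hθ P).2 hP
        obtain ⟨_, _, hR⟩ := key.1 ⟨hθ, hPs⟩
        exact ⟨hθ, hP, hR⟩
      · rintro ⟨hθ, hP, hR⟩
        exact ⟨hθ, hP⟩
    · -- joinability
      have hxyE : Relation.Join (Relation.ReflTransGen (GRw (cycRules η Rc)))
          (η x) (η y) := by
        have := h5 _ (Multiset.mem_cons_self _ _)
        simpa [Tm.subst_var', Relation.Join] using this
      intro e he
      rw [Multiset.mem_cons] at he
      rcases he with rfl | he
      · exact h5 _ (Multiset.mem_cons_self _ _)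
      · have h0 := h5 _ (Multiset.mem_cons_of_mem (Multiset.mem_map_of_mem
          (fun e => (Tm.subst (single x (Tm.var y)) e.1,
            Tm.subst (single x (Tm.var y)) e.2)) he))
        have h1 := subst_single_E (η := η) hxyE e.1
        have h2 := subst_single_E (η := η) hxyE e.2
        exact hEq.trans (hEq.symm h1) (hEq.trans h0 h2)
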